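/- arXiv:1507.05278 — 3 statements merged into one kernel-verified Lean document; each statement's English description precedes it below -/
import Mathlib

section
/- Let S be a set and R ⊆ S × D(S) a relation from states to finitely supported probability distributions. Then for all μ, ν ∈ D(S), μ is related to ν by the lifting of R if and only if there exist a finite index set I, probabilities p_i ∈ [0,1] with ∑_{i∈I} p_i = 1, states s_i ∈ S and distributions ν_i ∈ D(S) such that s_i R ν_i for every i ∈ I, μ = ∑_{i∈I} p_i · δ_{s_i}, and ν = ∑_{i∈I} p_i · ν_i. -/
/-- A finitely supported probability distribution over `S`. -/
structure ProbDist (S : Type) where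
  f : S → ℝ
  nonneg : ∀ s, 0 ≤ f s
  finSupp : (Function.support f).Finite
  sum_one : ∑ᶠ s, f s = 1

/-- The point distribution assigning probability 1 to `s`. -/
noncomputable def ProbDist.point {S : Type} (s : S) : ProbDist S where
  f := Set.indicator {s} (fun _ => (1 : ℝ))
  nonneg t := Set.indicator_nonneg (fun _ _ => zero_le_one) t
  finSupp := (Set.finite_singleton s).subset (by
    intro t ht
    by_contra h
    exact ht (Set.indicator_of_notMem h _))
  sum_one := by
    rw [finsum_eq_single _ s]
    · simp
    · intro x hx
      simp [Set.indicator_of_notMem, hx]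

/-- The lifting of a relation `R ⊆ S × D(S)` to `D(S) × D(S)`:
the smallest relation containing `(δ_s, ν)` whenever `R s ν`, and closed under
finite convex combinations. -/
inductive ProbDist.Lift {S : Type} (R : S → ProbDist S → Prop) :
    ProbDist S → ProbDist S → Prop
  | basic {s : S} {ν : ProbDist S} : R s ν → ProbDist.Lift R (ProbDist.point s) ν
  | lin {n : ℕ} (p : Fin n → ℝ) (μs νs : Fin n → ProbDist S)
      (hp : ∀ i, p i ∈ Set.Icc (0 : ℝ) 1) (hpsum : ∑ i, p i = 1)
      (h : ∀ i, ProbDist.Lift R (μs i) (νs i)) {μ ν : ProbDist S}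
      (hμ : ∀ s, μ.f s = ∑ i, p i * (μs i).f s)
      (hν : ∀ s, ν.f s = ∑ i, p i * (νs i).f s) :
      ProbDist.Lift R μ ν

/-- Lifting of a relation `R ⊆ S × S` on states: first form
`R̂ = {(s, δ_t) : s R t} ⊆ S × D(S)`, then lift. -/
def ProbDist.LiftRel {S : Type} (R : S → S → Prop) : ProbDist S → ProbDist S → Prop :=
  ProbDist.Lift (fun s ν => ∃ t, R s t ∧ ν = ProbDist.point t)

namespace ProbDist

variable {S : Type} {R : S → ProbDist S → Prop}

def HasConvexDecomposition (R : S → ProbDist S → Prop) (μ ν : ProbDist S) : Prop :=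
  ∃ (n : ℕ) (p : Fin n → ℝ) (ss : Fin n → S) (νs : Fin n → ProbDist S),
    (∀ i, p i ∈ Set.Icc (0 : ℝ) 1) ∧ (∑ i, p i = 1) ∧
    (∀ i, R (ss i) (νs i)) ∧
    (∀ t, μ.f t = ∑ i, p i * (point (ss i)).f t) ∧
    (∀ t, ν.f t = ∑ i, p i * (νs i).f t)

theorem hasConvexDecomposition_of_fintype {ι : Type} [Fintype ι] {μ ν : ProbDist S}
    (p : ι → ℝ) (ss : ι → S) (νs : ι → ProbDist S)
    (hp : ∀ i, p i ∈ Set.Icc (0 : ℝ) 1) (hpsum : ∑ i, p i = 1) (hR : ∀ i, R (ss i) (νs i))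
    (hμ : ∀ t, μ.f t = ∑ i, p i * (point (ss i)).f t)
    (hν : ∀ t, ν.f t = ∑ i, p i * (νs i).f t) :
    HasConvexDecomposition R μ ν := by
  let e := (Fintype.equivFin ι).symm
  refine ⟨Fintype.card ι, p ∘ e, ss ∘ e, νs ∘ e, fun k => hp (e k), ?_, fun k => hR (e k),
    fun t => ?_, fun t => ?_⟩
  · simpa only [Function.comp_apply, e.sum_comp] using hpsum
  · simpa only [Function.comp_apply, e.sum_comp (fun i => p i * (point (ss i)).f t)] using hμ t
  · simpa only [Function.comp_apply, e.sum_comp (fun i => p i * (νs i).f t)] using hν t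

theorem hasConvexDecomposition_point {s : S} {ν : ProbDist S} (h : R s ν) :
    HasConvexDecomposition R (point s) ν :=
  ⟨1, fun _ => 1, fun _ => s, fun _ => ν, fun _ => ⟨zero_le_one, le_rfl⟩, by simp, fun _ => h,
    by simp, by simp⟩

/-- A convex combination of convex decompositions is one again, indexed by the pairs `(i, j)` with
weights `pᵢ·qᵢⱼ`. -/
theorem hasConvexDecomposition_convexComb {n : ℕ} (p : Fin n → ℝ) (μs νs : Fin n → ProbDist S)
    (hp : ∀ i, p i ∈ Set.Icc (0 : ℝ) 1) (hpsum : ∑ i, p i = 1)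
    (h : ∀ i, HasConvexDecomposition R (μs i) (νs i)) {μ ν : ProbDist S}
    (hμ : ∀ s, μ.f s = ∑ i, p i * (μs i).f s)
    (hν : ∀ s, ν.f s = ∑ i, p i * (νs i).f s) :
    HasConvexDecomposition R μ ν := by
  choose m q ss νs' hq hqsum hR hμs hνs using h
  have sum_sigma (g : (i : Fin n) → Fin (m i) → ℝ) :
      ∑ x : (i : Fin n) × Fin (m i), p x.1 * q x.1 x.2 * g x.1 x.2
        = ∑ i, p i * ∑ j, q i j * g i j := by
    simp only [Fintype.sum_sigma, Finset.mul_sum, mul_assoc]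
  refine hasConvexDecomposition_of_fintype (ι := (i : Fin n) × Fin (m i))
    (fun x => p x.1 * q x.1 x.2) (fun x => ss x.1 x.2) (fun x => νs' x.1 x.2)
    (fun x => ⟨mul_nonneg (hp _).1 (hq _ _).1, mul_le_one₀ (hp _).2 (hq _ _).1 (hq _ _).2⟩) ?_
    (fun x => hR x.1 x.2) (fun t => ?_) (fun t => ?_)
  · simpa only [mul_one, hqsum, hpsum] using sum_sigma fun _ _ => 1
  · rw [hμ t, sum_sigma fun i j => (point (ss i j)).f t]
    simp only [hμs]
  · rw [hν t, sum_sigma fun i j => (νs' i j).f t]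
    simp only [hνs]

theorem HasConvexDecomposition.lift {μ ν : ProbDist S} :
    HasConvexDecomposition R μ ν → Lift R μ ν
  | ⟨_, p, ss, νs, hp, hpsum, hR, hμ, hν⟩ =>
    .lin p (fun i => point (ss i)) νs hp hpsum (fun i => .basic (hR i)) hμ hν

theorem Lift.hasConvexDecomposition {μ ν : ProbDist S} (h : Lift R μ ν) :
    HasConvexDecomposition R μ ν := by
  induction h with
  | basic hR => exact hasConvexDecomposition_point hR
  | lin p μs νs hp hpsum _ hμ hν ih =>
    exact hasConvexDecomposition_convexComb p μs νs hp hpsum ih hμ hν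

end ProbDist

/-- Characterisation of the lifted relation: `μ lift(R) ν` holds iff `μ` and `ν` arise
as matching convex combinations `μ = ∑ᵢ pᵢ·δ_{sᵢ}` and `ν = ∑ᵢ pᵢ·νᵢ` with `sᵢ R νᵢ`. -/
theorem lift_iff_convex_decomposition {S : Type} (R : S → ProbDist S → Prop)
    (μ ν : ProbDist S) :
    ProbDist.Lift R μ ν ↔
      ∃ (n : ℕ) (p : Fin n → ℝ) (ss : Fin n → S) (νs : Fin n → ProbDist S),
        (∀ i, p i ∈ Set.Icc (0 : ℝ) 1) ∧ (∑ i, p i = 1) ∧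
        (∀ i, R (ss i) (νs i)) ∧
        (∀ t, μ.f t = ∑ i, p i * (ProbDist.point (ss i)).f t) ∧
        (∀ t, ν.f t = ∑ i, p i * (νs i).f t) :=
  ⟨ProbDist.Lift.hasConvexDecomposition, ProbDist.HasConvexDecomposition.lift⟩
end

section
/- Let S be a set and R ⊆ S × D(S) a relation from states to finitely supported probability distributions. If the point distribution δ_s is related to μ by the lifting of R, then there exist a finite index set I, probabilities p_i ∈ [0,1] with ∑_{i∈I} p_i = 1, and distributions μ_i ∈ D(S) such that s R μ_i for each i ∈ I and μ = ∑_{i∈I} p_i·μ_i. -/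
/-!
Read distributions through their mass functions in `S → ℝ`. A point mass is an extreme point
of the distributions, so in any convex decomposition of `δ_s` every component of positive weight
is `δ_s` itself. Induction on the lifting therefore shows that `μ` lies in the convex hull of the
`R`-successors of `s`, and a point of a convex hull is a finite convex combination.
-/

namespace ProbDist

variable {S : Type}

theorem ext {μ ν : ProbDist S} (h : μ.f = ν.f) : μ = ν := by
  cases μ; cases ν; cases h; rfl

open Classical in
@[simp]
theorem point_f_apply (s t : S) : (point s).f t = if t = s then 1 else 0 := by
  by_cases h : t = s <;> simp [point, h]

theorem point_injective : Function.Injective (point : S → ProbDist S) := by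
  intro s s' h
  simpa using congrFun (congrArg ProbDist.f h) s

theorem eq_point_of_forall_ne {μ : ProbDist S} {s : S} (h : ∀ t ≠ s, μ.f t = 0) :
    μ = point s := by
  have hs : μ.f s = 1 := by simpa [finsum_eq_single _ s h] using μ.sum_one
  refine ext (funext fun t => ?_)
  by_cases ht : t = s
  · simp [ht, hs]
  · simp [ht, h t ht]

theorem eq_point_of_point_eq_sum {ι : Type*} [Fintype ι] {p : ι → ℝ} {μs : ι → ProbDist S}
    {s : S} (hp : ∀ i, 0 ≤ p i) (hs : ∀ t, (point s).f t = ∑ i, p i * (μs i).f t)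
    {i : ι} (hi : p i ≠ 0) : μs i = point s := by
  refine eq_point_of_forall_ne fun t ht => ?_
  have hsum : ∑ j, p j * (μs j).f t = 0 := by simpa [ht] using (hs t).symm
  have hterm := (Finset.sum_eq_zero_iff_of_nonneg fun j _ => mul_nonneg (hp j) ((μs j).nonneg t)).mp
    hsum i (Finset.mem_univ i)
  exact (mul_eq_zero.mp hterm).resolve_left hi

theorem f_eq_sum_smul {ι : Type*} [Fintype ι] {μ : ProbDist S} {p : ι → ℝ}
    {μs : ι → ProbDist S} (h : ∀ t, μ.f t = ∑ i, p i * (μs i).f t) :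
    μ.f = ∑ i, p i • (μs i).f := by
  ext t
  simp [h t]

theorem f_mem_convexHull_of_lift_point {R : S → ProbDist S → Prop} {s : S} {μ : ProbDist S}
    (h : Lift R (point s) μ) : μ.f ∈ convexHull ℝ (ProbDist.f '' {ν | R s ν}) := by
  generalize hδ : point s = δ at h
  induction h with
  | @basic s' ν hR =>
    obtain rfl := point_injective hδ
    exact subset_convexHull ℝ _ ⟨ν, hR, rfl⟩
  | @lin n p μs νs hp hpsum _ _ _ hμ hν ih =>
    subst hδ
    rw [f_eq_sum_smul hν, ← finsum_eq_sum_of_fintype]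
    refine (convex_convexHull ℝ _).finsum_mem (fun i => (hp i).1)
      (by rwa [finsum_eq_sum_of_fintype]) fun i hi => ?_
    exact ih i (eq_point_of_point_eq_sum (fun j => (hp j).1) hμ hi).symm

theorem exists_fin_decomposition_of_f_mem_convexHull {A : ProbDist S → Prop} {μ : ProbDist S}
    (h : μ.f ∈ convexHull ℝ (ProbDist.f '' {ν | A ν})) :
    ∃ (n : ℕ) (p : Fin n → ℝ) (μs : Fin n → ProbDist S),
      (∀ i, p i ∈ Set.Icc (0 : ℝ) 1) ∧ (∑ i, p i = 1) ∧
      (∀ i, A (μs i)) ∧ (∀ t, μ.f t = ∑ i, p i * (μs i).f t) := by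
  obtain ⟨ι, _, w, z, hw₀, hw₁, hz, hμ⟩ := mem_convexHull_iff_exists_fintype.mp h
  choose μs hA hμs using hz
  let e := Fintype.equivFin ι
  refine ⟨Fintype.card ι, w ∘ e.symm, μs ∘ e.symm, fun i => ⟨hw₀ _, ?_⟩, ?_,
    fun i => hA _, fun t => ?_⟩
  · exact hw₁ ▸ Finset.single_le_sum (fun j _ => hw₀ j) (Finset.mem_univ _)
  · rwa [← e.symm.sum_comp] at hw₁
  · simp only [← hμ, hμs, Function.comp_apply, Finset.sum_apply, Pi.smul_apply, smul_eq_mul]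
    exact (e.symm.sum_comp fun j => w j * z j t).symm

end ProbDist

/-- If `δ_s lift(R) μ` then `μ` is a convex combination of distributions each related
to `s` by `R`. -/
theorem lift_point_decomposition {S : Type} (R : S → ProbDist S → Prop)
    (s : S) (μ : ProbDist S) (h : ProbDist.Lift R (ProbDist.point s) μ) :
    ∃ (n : ℕ) (p : Fin n → ℝ) (μs : Fin n → ProbDist S),
      (∀ i, p i ∈ Set.Icc (0 : ℝ) 1) ∧ (∑ i, p i = 1) ∧
      (∀ i, R s (μs i)) ∧
      (∀ t, μ.f t = ∑ i, p i * (μs i).f t) :=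
  ProbDist.exists_fin_decomposition_of_f_mem_convexHull
    (ProbDist.f_mem_convexHull_of_lift_point h)
end

section
/- Let S be a set and R an equivalence relation on S. For all μ, ν ∈ D(S), μ is related to ν by the lifting of R to D(S) × D(S) if and only if for every R-equivalence class C ⊆ S, ∑_{s∈C} μ(s) = ∑_{s∈C} ν(s). -/
/-!
Lifting preserves the mass of every set `C` closed under `R`: this holds for the generators
`δ_s` and `δ_t` with `s R t`, and masses are affine in convex combinations. Conversely, if `μ` and
`ν` give the same mass `m(a)` to the class of each `a`, the weights `w(a, b) = μ(a) ν(b) / m(a)`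
on pairs with `a R b` form a coupling of `μ` and `ν`, which presents the two distributions as the
same convex combination of the related pairs `δ_a`, `δ_b`.
-/

namespace ProbDist

variable {S : Type}

noncomputable def prob (μ : ProbDist S) (C : Set S) : ℝ := ∑ᶠ t ∈ C, μ.f t

lemma prob_univ (μ : ProbDist S) : μ.prob Set.univ = 1 := by
  rw [prob, finsum_mem_univ, μ.sum_one]

@[simp] lemma point_apply_self (a : S) : (point a).f a = 1 := by
  simp [point]

lemma point_apply_of_ne {a s : S} (h : s ≠ a) : (point a).f s = 0 := by
  simp [point, h]

lemma support_point_subset (a : S) : Function.support (point a).f ⊆ ({a} : Finset S) :=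
  fun _ hs => Finset.mem_singleton.2 (by_contra fun h => hs (point_apply_of_ne h))

lemma prob_eq_sum_ite (μ : ProbDist S) {A : Finset S} (hA : Function.support μ.f ⊆ A)
    (P : S → Prop) [DecidablePred P] :
    μ.prob {t | P t} = ∑ t ∈ A, if P t then μ.f t else 0 := by
  rw [← Finset.sum_filter]
  apply finsum_mem_eq_sum_of_inter_support_eq
  ext t
  simp only [Set.mem_inter_iff, Finset.coe_filter, Set.mem_ofPred_eq]
  exact ⟨fun h => ⟨⟨hA h.2, h.1⟩, h.2⟩, fun h => ⟨h.1.2, h.2⟩⟩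

lemma prob_point (a : S) (C : Set S) [Decidable (a ∈ C)] :
    (point a).prob C = if a ∈ C then 1 else 0 := by
  classical
  refine ((point a).prob_eq_sum_ite (support_point_subset a) (· ∈ C)).trans ?_
  rw [Finset.sum_singleton, point_apply_self]
  congr

lemma eq_zero_of_prob_eq_zero (μ : ProbDist S) {C : Set S} {s : S} (hs : s ∈ C)
    (hC : μ.prob C = 0) : μ.f s = 0 := by
  classical
  have hA : Function.support μ.f ⊆ ↑(insert s μ.finSupp.toFinset) := fun t ht =>
    Finset.mem_insert_of_mem (μ.finSupp.mem_toFinset.2 ht)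
  rw [← Set.ofPred_mem_eq (s := C), μ.prob_eq_sum_ite hA, Finset.sum_eq_zero_iff_of_nonneg] at hC
  · simpa [hs] using hC s (Finset.mem_insert_self s _)
  · intro t _
    split_ifs
    exacts [μ.nonneg t, le_rfl]

lemma prob_eq_sum_mul_prob {ι : Type*} {F : Finset ι} {p : ι → ℝ} {μ : ProbDist S}
    {μs : ι → ProbDist S} (hμ : ∀ s, μ.f s = ∑ i ∈ F, p i * (μs i).f s) (C : Set S) :
    μ.prob C = ∑ i ∈ F, p i * (μs i).prob C := by
  have hC : ∀ t, C.indicator μ.f t = ∑ i ∈ F, p i * C.indicator (μs i).f t := by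
    intro t
    by_cases ht : t ∈ C <;> simp [ht, hμ]
  simp only [prob, finsum_mem_def, finsum_congr hC, mul_finsum]
  exact finsum_sum_comm _ _ fun i _ =>
    (μs i).finSupp.subset <|
      (Function.support_mul_subset_right _ _).trans (by
        rw [Set.support_indicator]; exact Set.inter_subset_right)

lemma prob_nonneg (μ : ProbDist S) (C : Set S) : 0 ≤ μ.prob C :=
  finsum_nonneg fun t => finsum_nonneg fun _ => μ.nonneg t

lemma sum_mul_point_apply {f : S → ℝ} {A : Finset S} (hA : Function.support f ⊆ A) (s : S) :
    ∑ a ∈ A, f a * (point a).f s = f s := by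
  by_cases hs : s ∈ A
  · rw [Finset.sum_eq_single_of_mem s hs, point_apply_self, mul_one]
    intro a _ has
    rw [point_apply_of_ne (Ne.symm has), mul_zero]
  · rw [Function.notMem_support.1 fun h => hs (hA h)]
    exact Finset.sum_eq_zero fun a ha => by
      rw [point_apply_of_ne (ne_of_mem_of_not_mem ha hs).symm, mul_zero]

section Lift

variable {R : S → ProbDist S → Prop}

lemma Lift.of_sum {ι : Type*} (F : Finset ι) (p : ι → ℝ) (μs νs : ι → ProbDist S)
    (hp : ∀ i ∈ F, 0 ≤ p i) (h : ∀ i ∈ F, p i ≠ 0 → Lift R (μs i) (νs i)) {μ ν : ProbDist S}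
    (hμ : ∀ s, μ.f s = ∑ i ∈ F, p i * (μs i).f s)
    (hν : ∀ s, ν.f s = ∑ i ∈ F, p i * (νs i).f s) : Lift R μ ν := by
  classical
  set G := F.filter (p · ≠ 0)
  have restrict : ∀ g : ι → ℝ, ∑ i ∈ F, p i * g i = ∑ i ∈ G, p i * g i := by
    intro g
    rw [Finset.sum_filter_of_ne]
    intro i _ hi
    exact left_ne_zero_of_mul hi
  have hsum : ∑ i ∈ G, p i = 1 := by
    have := prob_eq_sum_mul_prob hμ Set.univ
    rw [restrict] at this
    simpa only [prob_univ, mul_one, eq_comm] using this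
  let e := G.equivFin.symm
  have reindex : ∀ g : ι → ℝ, ∑ j, g (e j) = ∑ i ∈ G, g i := fun g =>
    (e.sum_comp (g ∘ (↑))).trans (G.sum_coe_sort g)
  have hG : ∀ j, (e j : ι) ∈ F ∧ p (e j) ≠ 0 := fun j => Finset.mem_filter.1 (e j).2
  refine Lift.lin (fun j => p (e j)) (fun j => μs (e j)) (fun j => νs (e j))
    (fun j => ⟨hp _ (hG j).1, ?_⟩) ((reindex p).trans hsum) (fun j => h _ (hG j).1 (hG j).2)
    (fun s => ?_) (fun s => ?_)
  · rw [← hsum]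
    exact Finset.single_le_sum (fun i hi => hp i (Finset.mem_filter.1 hi).1) (e j).2
  · rw [hμ, restrict, ← reindex]
  · rw [hν, restrict, ← reindex]

lemma Lift.prob_eq {C : Set S} (hR : ∀ s ν, R s ν → (point s).prob C = ν.prob C)
    {μ ν : ProbDist S} (h : Lift R μ ν) : μ.prob C = ν.prob C := by
  induction h with
  | basic hsν => exact hR _ _ hsν
  | lin p μs νs _ _ _ hμ hν ih =>
    rw [prob_eq_sum_mul_prob hμ, prob_eq_sum_mul_prob hν]
    simp only [ih]

end Lift

lemma LiftRel.prob_eq {R : S → S → Prop} {C : Set S} (hC : ∀ s t, R s t → (s ∈ C ↔ t ∈ C))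
    {μ ν : ProbDist S} (h : LiftRel R μ ν) : μ.prob C = ν.prob C := by
  classical
  refine Lift.prob_eq ?_ h
  rintro s _ ⟨t, hst, rfl⟩
  simp only [prob_point, hC s t hst]


noncomputable def classCoupling (R : S → S → Prop) [DecidableRel R] (μ ν : ProbDist S)
    (q : S × S) : ℝ :=
  if R q.1 q.2 then μ.f q.1 * ν.f q.2 / μ.prob {t | R q.1 t} else 0

section Coupling

variable {R : S → S → Prop} [DecidableRel R] {μ ν : ProbDist S}

lemma classCoupling_nonneg (q : S × S) : 0 ≤ classCoupling R μ ν q := by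
  unfold classCoupling
  split_ifs
  exacts [div_nonneg (mul_nonneg (μ.nonneg _) (ν.nonneg _)) (μ.prob_nonneg _), le_rfl]

lemma sum_classCoupling_right (hR : Equivalence R)
    (h : ∀ s, μ.prob {t | R s t} = ν.prob {t | R s t}) {B : Finset S}
    (hB : Function.support ν.f ⊆ B) (a : S) :
    ∑ b ∈ B, classCoupling R μ ν (a, b) = μ.f a := calc
  _ = μ.f a / μ.prob {t | R a t} * ∑ b ∈ B, if R a b then ν.f b else 0 := by
    rw [Finset.mul_sum]
    refine Finset.sum_congr rfl fun b _ => ?_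
    by_cases hab : R a b
    · simp only [classCoupling, hab, if_true]
      ring
    · simp [classCoupling, hab]
  _ = μ.f a := by
    rw [← ν.prob_eq_sum_ite hB, ← h a]
    exact div_mul_cancel_of_imp (μ.eq_zero_of_prob_eq_zero (hR.refl a))

lemma sum_classCoupling_left (hR : Equivalence R)
    (h : ∀ s, μ.prob {t | R s t} = ν.prob {t | R s t}) {A : Finset S}
    (hA : Function.support μ.f ⊆ A) (b : S) :
    ∑ a ∈ A, classCoupling R μ ν (a, b) = ν.f b := calc
  _ = ν.f b / ν.prob {t | R b t} * ∑ a ∈ A, if R b a then μ.f a else 0 := by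
    rw [Finset.mul_sum]
    refine Finset.sum_congr rfl fun a _ => ?_
    by_cases hab : R a b
    · have hclass : {t | R a t} = {t | R b t} :=
        Set.ext fun t => ⟨hR.trans (hR.symm hab), hR.trans hab⟩
      simp only [classCoupling, hab, hR.symm hab, if_true, hclass, h b]
      ring
    · have hba : ¬R b a := fun h => hab (hR.symm h)
      simp [classCoupling, hab, hba]
  _ = ν.f b := by
    rw [← μ.prob_eq_sum_ite hA, h b]
    exact div_mul_cancel_of_imp (ν.eq_zero_of_prob_eq_zero (hR.refl b))

end Coupling

lemma LiftRel.of_prob_class_eq {R : S → S → Prop} (hR : Equivalence R) {μ ν : ProbDist S}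
    (h : ∀ s, μ.prob {t | R s t} = ν.prob {t | R s t}) : LiftRel R μ ν := by
  classical
  have hA : Function.support μ.f ⊆ μ.finSupp.toFinset := fun t ht => μ.finSupp.mem_toFinset.2 ht
  have hB : Function.support ν.f ⊆ ν.finSupp.toFinset := fun t ht => ν.finSupp.mem_toFinset.2 ht
  refine Lift.of_sum (μ.finSupp.toFinset ×ˢ ν.finSupp.toFinset) (classCoupling R μ ν)
    (fun q => point q.1) (fun q => point q.2) (fun q _ => classCoupling_nonneg q) ?_ ?_ ?_
  · intro q _ hq
    exact Lift.basic ⟨q.2, by_contra fun hn => hq (if_neg hn), rfl⟩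
  · intro s
    rw [Finset.sum_product, ← sum_mul_point_apply hA s]
    refine Finset.sum_congr rfl fun a _ => ?_
    rw [← sum_classCoupling_right hR h hB a, Finset.sum_mul]
  · intro s
    rw [Finset.sum_product_right, ← sum_mul_point_apply hB s]
    refine Finset.sum_congr rfl fun b _ => ?_
    rw [← sum_classCoupling_left hR h hA b, Finset.sum_mul]

end ProbDist

/-- For an equivalence relation `R` on `S`, two distributions are related by the lifting
of `R` iff they assign the same probability to every `R`-equivalence class. -/
theorem liftRel_equiv_iff_classes {S : Type} (R : S → S → Prop) (hR : Equivalence R)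
    (μ ν : ProbDist S) :
    ProbDist.LiftRel R μ ν ↔
      ∀ s : S, ∑ᶠ t ∈ {t | R s t}, μ.f t = ∑ᶠ t ∈ {t | R s t}, ν.f t :=
  ⟨fun h _ => h.prob_eq fun _ _ hab =>
      ⟨fun hs => hR.trans hs hab, fun hs => hR.trans hs (hR.symm hab)⟩,
    ProbDist.LiftRel.of_prob_class_eq hR⟩
end
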